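/- arXiv:2512.11107 — 5 statements merged into one kernel-verified Lean document; each statement's English description precedes it below -/
import Mathlib

section
/- (Poisson Modular Convergence Theorem) For a Poisson random variable n with mean μ > 0 and integer modulus M ≥ 2, the maximal deviation from uniformity of the residue distribution satisfies max_{0 ≤ k < M} |P(n mod M = k) − 1/M| ≤ ((M−1)/M) · exp(−2μ sin²(π/M)). -/
open scoped Real

/-- The Poisson probability mass function with mean `μ`. -/
noncomputable def poissonPMF (μ : ℝ) (k : ℕ) : ℝ :=
  Real.exp (-μ) * μ ^ k / Nat.factorial k

/-- Probability that a Poisson(μ) variable is congruent to `k` modulo `M`. -/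
noncomputable def poissonMod (μ : ℝ) (M k : ℕ) : ℝ :=
  ∑' j : ℕ, poissonPMF μ (k + j * M)

open Complex Finset in
noncomputable def pmcW (M : ℕ) (t : ℤ) : ℂ := Complex.exp (2 * π * Complex.I * t / M)

open Complex in
lemma pmcW_eq (M : ℕ) (t : ℤ) : pmcW M t = Complex.exp (((2 * π * t / M : ℝ) : ℂ) * I) := by
  unfold pmcW; congr 1; push_cast; ring

open Complex in
lemma pmcW_abs (M : ℕ) (t : ℤ) : ‖pmcW M t‖ = 1 := by
  rw [pmcW_eq, Complex.norm_exp]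
  simp

open Complex in
lemma pmcW_re (M : ℕ) (t : ℤ) : (pmcW M t).re = Real.cos (2 * π * t / M) := by
  rw [pmcW_eq, Complex.exp_ofReal_mul_I_re]

open Complex in
lemma pmcW_pow (M : ℕ) (t : ℤ) (n : ℕ) : (pmcW M t) ^ n = pmcW M (t * n) := by
  unfold pmcW
  rw [← Complex.exp_nat_mul]
  congr 1; push_cast; ring

open Complex in
lemma pmcW_zpow (M : ℕ) (t : ℤ) : pmcW M t = (Complex.exp (2 * π * I / M)) ^ t := by
  rw [← Complex.exp_int_mul]
  unfold pmcW; congr 1; push_cast; ring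

open Complex Finset in
lemma pmcW_geom (M : ℕ) (hM : 2 ≤ M) (m : ℤ) :
    ∑ r ∈ Finset.range M, (pmcW M m) ^ r = if (M : ℤ) ∣ m then (M : ℂ) else 0 := by
  have hM0 : (M : ℕ) ≠ 0 := by omega
  have hprim := Complex.isPrimitiveRoot_exp M hM0
  have hw : pmcW M m = (Complex.exp (2 * π * I / M)) ^ m := pmcW_zpow M m
  split_ifs with h
  · have h1 : pmcW M m = 1 := by rw [hw, (hprim.zpow_eq_one_iff_dvd m)]; exact h
    simp [h1]
  · have h1 : pmcW M m ≠ 1 := by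
      intro hc
      exact h ((hprim.zpow_eq_one_iff_dvd m).mp (by rw [← hw]; exact hc))
    rw [geom_sum_eq h1]
    have h2 : (pmcW M m) ^ M = 1 := by
      rw [pmcW_pow, pmcW_zpow, hprim.zpow_eq_one_iff_dvd]
      exact ⟨m, by push_cast; ring⟩
    rw [h2, sub_self, zero_div]

open Complex in
lemma cexp_tsum (z : ℂ) : Complex.exp z = ∑' n : ℕ, z ^ n / n.factorial := by
  rw [Complex.exp_eq_exp_ℂ, NormedSpace.exp_eq_tsum_div]

/-- summability of the generic term -/
lemma pmc_summable (μ : ℝ) (hμ : 0 < μ) (M : ℕ) (t : ℤ) (r : ℕ) :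
    Summable (fun n : ℕ => (μ : ℂ) ^ n / n.factorial * (pmcW M ((n : ℤ) + t)) ^ r) := by
  apply Summable.of_norm
  apply Summable.of_nonneg_of_le (fun n => norm_nonneg _) _ (Real.summable_pow_div_factorial μ)
  intro n
  simp [norm_mul, norm_div, norm_pow, pmcW_abs,
    Complex.norm_real, Real.norm_eq_abs, Complex.norm_natCast, abs_of_pos hμ]

open Complex Finset in
lemma pmc_key (μ : ℝ) (hμ : 0 < μ) (M k : ℕ) (hM : 2 ≤ M) (hk : k < M) :
    (M : ℂ) * ∑' j : ℕ, (μ : ℂ) ^ (k + j * M) / (Nat.factorial (k + j * M)) =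
      ∑ r ∈ Finset.range M, pmcW M (-(k * r)) * Complex.exp (μ * pmcW M r) := by
  have hterm : ∀ r ∈ Finset.range M,
      pmcW M (-(k * r)) * Complex.exp (μ * pmcW M r)
        = ∑' n : ℕ, (μ : ℂ) ^ n / n.factorial * (pmcW M ((n : ℤ) - k)) ^ r := by
    intro r _
    rw [cexp_tsum, ← tsum_mul_left]
    congr 1; funext n
    have hww : pmcW M (-(k * r)) * pmcW M ((r : ℤ) * n) = pmcW M (((n : ℤ) - k) * r) := by
      unfold pmcW
      rw [← Complex.exp_add]
      congr 1; push_cast; ring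
    rw [mul_pow, pmcW_pow, pmcW_pow, ← hww]
    ring
  rw [Finset.sum_congr rfl hterm]
  rw [← Summable.tsum_finsetSum (fun r _ => by
    simpa [sub_eq_add_neg] using pmc_summable μ hμ M (-(k:ℤ)) r)]
  have hinner : ∀ n : ℕ,
      (∑ r ∈ Finset.range M, (μ : ℂ) ^ n / n.factorial * (pmcW M ((n : ℤ) - k)) ^ r)
        = if (M : ℤ) ∣ ((n : ℤ) - k) then (M : ℂ) * ((μ:ℂ) ^ n / n.factorial) else 0 := by
    intro n
    rw [← Finset.mul_sum, pmcW_geom M hM]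
    split_ifs with h
    · ring
    · simp
  rw [tsum_congr hinner]
  rw [← tsum_mul_left]
  have hinj : Function.Injective (fun j : ℕ => k + j * M) := by
    intro a b hab
    simp only at hab
    have : a * M = b * M := by omega
    exact Nat.eq_of_mul_eq_mul_right (by omega) this
  rw [← Function.Injective.tsum_eq hinj (f := fun n : ℕ =>
      if (M : ℤ) ∣ ((n : ℤ) - k) then (M : ℂ) * ((μ:ℂ) ^ n / n.factorial) else 0)]
  · apply tsum_congr
    intro j
    have hd : (M : ℤ) ∣ ((k + j * M : ℕ) : ℤ) - k := by
      push_cast; exact ⟨j, by ring⟩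
    simp only [hd, if_pos]
  · intro n hn
    simp only [Function.mem_support] at hn
    by_contra hmem
    apply hn
    rw [if_neg]
    intro hdvd
    apply hmem
    obtain ⟨c, hc⟩ := hdvd
    have hc0 : 0 ≤ c := by
      by_contra hcneg
      push_neg at hcneg
      have : (n : ℤ) - k ≤ -M := by
        calc (n : ℤ) - k = M * c := hc
        _ ≤ M * (-1) := by
            apply mul_le_mul_of_nonneg_left (by omega) (by positivity)
        _ = -M := by ring
      omega
    refine ⟨c.toNat, ?_⟩
    simp only
    have : (n : ℤ) = k + c.toNat * M := by
      rw [Int.toNat_of_nonneg hc0]; push_cast at hc ⊢; linarith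
    omega

lemma pmc_sin_ge {a x : ℝ} (ha : 0 ≤ a) (h1 : a ≤ x) (h2 : x ≤ π - a) :
    Real.sin a ≤ Real.sin x := by
  have hpi := Real.pi_pos
  rcases le_or_gt x (π / 2) with h | h
  · exact Real.sin_le_sin_of_le_of_le_pi_div_two (by linarith) h h1
  · rw [← Real.sin_pi_sub x]
    exact Real.sin_le_sin_of_le_of_le_pi_div_two (by linarith) (by linarith) (by linarith)

open Complex Finset in
/-- **Poisson Modular Convergence Theorem.** For a Poisson random variable with mean
`μ > 0` and modulus `M ≥ 2`, the maximal deviation from uniformity of the residue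
distribution satisfies
`max_{0 ≤ k < M} |P(n mod M = k) − 1/M| ≤ ((M−1)/M) exp (−2 μ sin² (π/M))`. -/
theorem poisson_modular_convergence (μ : ℝ) (hμ : 0 < μ) (M : ℕ) (hM : 2 ≤ M) :
    ∀ k < M, |poissonMod μ M k - 1 / M| ≤
      ((M - 1) / M) * Real.exp (-2 * μ * Real.sin (π / M) ^ 2) := by
  intro k hk
  have hpi := Real.pi_pos
  have hMR : (0 : ℝ) < M := by exact_mod_cast (by omega : 0 < M)
  have hinj : Function.Injective (fun j : ℕ => k + j * M) := by
    intro a b hab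
    simp only at hab
    have : a * M = b * M := by omega
    exact Nat.eq_of_mul_eq_mul_right (by omega) this
  set T : ℝ := ∑' j : ℕ, μ ^ (k + j * M) / (Nat.factorial (k + j * M)) with hT
  have hmod : poissonMod μ M k = Real.exp (-μ) * T := by
    unfold poissonMod poissonPMF
    rw [← tsum_mul_left]
    congr 1; funext j; rw [mul_div_assoc]
  have hTc : ((T : ℂ)) = ∑' j : ℕ, (μ : ℂ) ^ (k + j * M) / (Nat.factorial (k + j * M)) := by
    rw [hT, Complex.ofReal_tsum]
    congr 1; funext j; push_cast; ring
  have hkey := pmc_key μ hμ M k hM hk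
  rw [← hTc] at hkey
  -- split off the r = 0 term
  have hw0 : pmcW M (-(k * (0:ℕ))) * Complex.exp (μ * pmcW M (0:ℕ)) = Complex.exp μ := by
    have h1 : pmcW M ((0:ℕ):ℤ) = 1 := by unfold pmcW; norm_num
    have h2 : pmcW M (-(k * ((0:ℕ):ℤ))) = 1 := by unfold pmcW; norm_num
    rw [show (-(k * (0:ℕ)) : ℤ) = -(k * ((0:ℕ):ℤ)) by norm_num, h2, h1, one_mul, mul_one]
  have hsplit : ∑ r ∈ Finset.range M, pmcW M (-(k * r)) * Complex.exp (μ * pmcW M r)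
      = Complex.exp μ + ∑ r ∈ Finset.Ico 1 M, pmcW M (-(k * r)) * Complex.exp (μ * pmcW M r) := by
    rw [Finset.range_eq_Ico, Finset.sum_eq_sum_Ico_succ_bot (by omega : 0 < M)]
    rw [hw0]
  rw [hsplit] at hkey
  set S : ℂ := ∑ r ∈ Finset.Ico 1 M, pmcW M (-(k * r)) * Complex.exp (μ * pmcW M r) with hS
  -- express the deviation
  have hMc : (M : ℂ) ≠ 0 := by exact_mod_cast (by omega : (M:ℕ) ≠ 0)
  have hdev : ((poissonMod μ M k - 1 / M : ℝ) : ℂ)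
      = (Real.exp (-μ) / M : ℝ) * S := by
    have hTcval : (T : ℂ) = (Complex.exp μ + S) / M := by
      field_simp at hkey ⊢
      linear_combination hkey
    push_cast [hmod]
    rw [hTcval]
    have hexp : Complex.exp (-(μ:ℂ)) * Complex.exp (μ:ℂ) = 1 := by
      rw [← Complex.exp_add]; norm_num
    field_simp
    linear_combination hexp
  -- bound the absolute value
  set B : ℝ := Real.exp (-2 * μ * Real.sin (π / M) ^ 2) with hB
  have habs_term : ∀ r : ℕ,
      ‖pmcW M (-(k * r)) * Complex.exp ((μ:ℂ) * pmcW M r)‖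
        = Real.exp (μ * Real.cos (2 * π * r / M)) := by
    intro r
    rw [norm_mul, pmcW_abs, one_mul, Complex.norm_exp]
    congr 1
    have h1 : ((μ:ℂ) * pmcW M (r:ℤ)).re = μ * (pmcW M (r:ℤ)).re := by
      simp [Complex.mul_re]
    rw [h1, pmcW_re]
    push_cast; ring
  have hSle : ‖S‖ ≤ ∑ r ∈ Finset.Ico 1 M, Real.exp (μ * Real.cos (2 * π * r / M)) := by
    refine le_trans (norm_sum_le _ _) (le_of_eq ?_)
    exact Finset.sum_congr rfl fun r _ => habs_term r
  have hper : ∀ r ∈ Finset.Ico 1 M,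
      Real.exp (-μ) * Real.exp (μ * Real.cos (2 * π * r / M)) ≤ B := by
    intro r hr
    obtain ⟨hr1, hr2⟩ := Finset.mem_Ico.mp hr
    have hrR1 : (1:ℝ) ≤ r := by exact_mod_cast hr1
    have hrR2 : (r:ℝ) ≤ (M:ℝ) - 1 := by
      have : (r:ℝ) + 1 ≤ M := by exact_mod_cast hr2
      linarith
    rw [← Real.exp_add, hB]
    apply Real.exp_le_exp.mpr
    have hcos : Real.cos (2 * π * r / M) = 1 - 2 * Real.sin (π * r / M) ^ 2 := by
      rw [show 2 * π * (r:ℝ) / M = 2 * (π * r / M) by ring, Real.cos_two_mul, Real.cos_sq']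
      ring
    have hx1 : π / M ≤ π * r / M := by
      apply div_le_div_of_nonneg_right ?_ hMR.le
      nlinarith
    have hx2 : π * r / M ≤ π - π / M := by
      have heq : π - π / M = π * ((M:ℝ) - 1) / M := by field_simp
      rw [heq]
      apply div_le_div_of_nonneg_right ?_ hMR.le
      nlinarith
    have hsn : 0 ≤ Real.sin (π / M) := by
      apply Real.sin_nonneg_of_nonneg_of_le_pi (by positivity)
      rw [div_le_iff₀ hMR]
      nlinarith
    have hsin := pmc_sin_ge (by positivity : (0:ℝ) ≤ π / M) hx1 hx2
    have hsq : Real.sin (π / M) ^ 2 ≤ Real.sin (π * r / M) ^ 2 :=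
      pow_le_pow_left₀ hsn hsin 2
    rw [hcos]
    nlinarith [hμ.le]
  have hexpos : (0:ℝ) < Real.exp (-μ) / M := by positivity
  have habs : |poissonMod μ M k - 1 / M|
      = ‖((poissonMod μ M k - 1 / (M:ℝ) : ℝ) : ℂ)‖ := ((Complex.norm_real _).trans (Real.norm_eq_abs _)).symm
  rw [habs, hdev, norm_mul, Complex.norm_real, Real.norm_eq_abs, abs_of_pos hexpos]
  have hcard : ((Finset.Ico 1 M).card : ℝ) = (M:ℝ) - 1 := by
    rw [Nat.card_Ico]
    push_cast [Nat.cast_sub (by omega : 1 ≤ M)]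
    ring
  calc Real.exp (-μ) / M * ‖S‖
      ≤ Real.exp (-μ) / M * ∑ r ∈ Finset.Ico 1 M, Real.exp (μ * Real.cos (2 * π * r / M)) := by
        exact mul_le_mul_of_nonneg_left hSle hexpos.le
    _ = (1 / M) * ∑ r ∈ Finset.Ico 1 M,
          Real.exp (-μ) * Real.exp (μ * Real.cos (2 * π * r / M)) := by
        rw [Finset.mul_sum, Finset.mul_sum]
        exact Finset.sum_congr rfl fun r _ => by ring
    _ ≤ (1 / M) * (((M:ℝ) - 1) * B) := by
        apply mul_le_mul_of_nonneg_left _ (by positivity)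
        calc ∑ r ∈ Finset.Ico 1 M, Real.exp (-μ) * Real.exp (μ * Real.cos (2 * π * r / M))
            ≤ ∑ _r ∈ Finset.Ico 1 M, B := Finset.sum_le_sum hper
          _ = ((Finset.Ico 1 M).card : ℝ) * B := by rw [Finset.sum_const, nsmul_eq_mul]
          _ = ((M:ℝ) - 1) * B := by rw [hcard]
    _ = ((M:ℝ) - 1) / M * B := by ring
end

section
/- For a Poisson random variable n with mean μ, M ≥ 2, and any 0 ≤ k < M, the deviation satisfies |P(n mod M = k) − 1/M| ≤ (1/M) ∑_{j=1}^{M−1} exp(−2μ sin²(π j / M)). -/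
open scoped Real

lemma poissonMod_fourier (μ : ℝ) (M k : ℕ) (hM : 2 ≤ M) (hk : k < M) :
    ((poissonMod μ M k : ℝ) : ℂ) = (1 / M) *
      ∑ j ∈ Finset.range M,
        (Complex.exp (2 * π * Complex.I / M) ^ (j * k))⁻¹ *
          Complex.exp (μ * (Complex.exp (2 * π * Complex.I / M) ^ j - 1)) := by
  have hMne : M ≠ 0 := by omega
  have hM0 : (M : ℂ) ≠ 0 := Nat.cast_ne_zero.mpr hMne
  set ω : ℂ := Complex.exp (2 * π * Complex.I / M) with hωdef
  have hω : IsPrimitiveRoot ω M := Complex.isPrimitiveRoot_exp M hMne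
  have hωM : ω ^ M = 1 := hω.pow_eq_one
  have hωne : ω ≠ 0 := Complex.exp_ne_zero _
  set c : ℕ → ℂ := fun n => Complex.exp (-(μ:ℂ)) * (μ:ℂ) ^ n / n.factorial with hcdef
  set z : ℕ → ℂ := fun n => ω ^ n / ω ^ k with hzdef
  have hcnorm_eq : ∀ n : ℕ, ‖c n‖ = Real.exp (-μ) * |μ| ^ n / n.factorial := by
    intro n
    simp [hcdef, map_div₀, map_mul, map_pow, Complex.norm_exp,
      Complex.norm_real, Complex.norm_natCast]
  have hc_norm : Summable (fun n : ℕ => Real.exp (-μ) * |μ| ^ n / n.factorial) := by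
    simpa [mul_div_assoc] using (Real.summable_pow_div_factorial |μ|).mul_left (Real.exp (-μ))
  have habsω : ‖ω‖ = 1 := by
    rw [hωdef, Complex.norm_exp]
    norm_num [Complex.div_re]
  have hzabs : ∀ n : ℕ, ‖z n‖ = 1 := by
    intro n; simp [hzdef, norm_div, norm_pow, habsω]
  have hgsum : ∀ j : ℕ, Summable (fun n : ℕ => c n * z n ^ j) := by
    intro j
    apply Summable.of_norm
    refine hc_norm.congr fun n => ?_
    rw [norm_mul, hcnorm_eq, norm_pow, hzabs, one_pow, mul_one]
  -- each Fourier term is a tsum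
  have hterm : ∀ j ∈ Finset.range M,
      (ω ^ (j * k))⁻¹ * Complex.exp ((μ:ℂ) * (ω ^ j - 1)) = ∑' n : ℕ, c n * z n ^ j := by
    intro j _
    have hexp : Complex.exp ((μ:ℂ) * ω ^ j) = ∑' n : ℕ, ((μ:ℂ) * ω ^ j) ^ n / n.factorial := by
      rw [Complex.exp_eq_exp_ℂ, NormedSpace.exp_eq_tsum_div]
    have hsplit : Complex.exp ((μ:ℂ) * (ω ^ j - 1)) =
        Complex.exp (-(μ:ℂ)) * Complex.exp ((μ:ℂ) * ω ^ j) := by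
      rw [← Complex.exp_add]; ring_nf
    rw [hsplit, hexp, ← mul_assoc, ← tsum_mul_left]
    refine tsum_congr fun n => ?_
    have h1 : ω ^ (j * k) = (ω ^ k) ^ j := by rw [← pow_mul, mul_comm]
    have h2 : (ω ^ j) ^ n = (ω ^ n) ^ j := by rw [← pow_mul, mul_comm, pow_mul]
    rw [hcdef, hzdef]
    simp only [mul_pow, h1, h2, div_pow]
    field_simp
  -- geometric sum of roots of unity
  have hgeom : ∀ n : ℕ, ∑ j ∈ Finset.range M, z n ^ j = if n % M = k then (M : ℂ) else 0 := by
    intro n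
    have hz1iff : z n = 1 ↔ n % M = k := by
      rw [hzdef, div_eq_one_iff_eq (pow_ne_zero _ hωne)]
      have hpow : ω ^ n = ω ^ (n % M) := by
        conv_lhs => rw [← Nat.div_add_mod n M]
        rw [pow_add, pow_mul, hωM, one_pow, one_mul]
      constructor
      · intro h
        exact hω.pow_inj (Nat.mod_lt _ (by omega)) hk (by rw [← hpow, h])
      · intro h
        rw [hpow, h]
    by_cases h : z n = 1
    · rw [if_pos (hz1iff.mp h), h]
      simp
    · rw [if_neg (fun hc => h (hz1iff.mpr hc)), geom_sum_eq h]
      have : z n ^ M = 1 := by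
        rw [hzdef, div_pow, ← pow_mul, ← pow_mul, mul_comm n M, mul_comm k M,
          pow_mul, pow_mul, hωM, one_pow, one_pow]
        norm_num
      rw [this, sub_self, zero_div]
  -- swap sums
  have hswap : ∑ j ∈ Finset.range M, ∑' n : ℕ, c n * z n ^ j =
      ∑' n : ℕ, ∑ j ∈ Finset.range M, c n * z n ^ j :=
    (Summable.tsum_finsetSum fun j _ => hgsum j).symm
  -- reindex the congruence-class sum
  have hreindex : ∑' n : ℕ, (if n % M = k then c n else 0) = ∑' j : ℕ, c (k + j * M) := by
    have hinj : Function.Injective (fun j : ℕ => k + j * M) := by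
      intro a b hab
      simp only [add_right_inj] at hab
      exact Nat.eq_of_mul_eq_mul_right (by omega) hab
    have hsupp : Function.support (fun n : ℕ => if n % M = k then c n else 0) ⊆
        Set.range (fun j : ℕ => k + j * M) := by
      intro n hn
      simp only [Function.mem_support, ne_eq, ite_eq_right_iff, not_forall] at hn
      obtain ⟨hmod, -⟩ := hn
      refine ⟨n / M, ?_⟩
      simp only
      rw [← hmod, Nat.mod_add_div']
    rw [← hinj.tsum_eq hsupp]
    refine tsum_congr fun j => ?_
    have : (k + j * M) % M = k := by
      rw [Nat.add_mul_mod_self_right, Nat.mod_eq_of_lt hk]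
    rw [if_pos this]
  -- the left side as a complex tsum
  have hlhs : ((poissonMod μ M k : ℝ) : ℂ) = ∑' j : ℕ, c (k + j * M) := by
    rw [poissonMod, Complex.ofReal_tsum]
    refine tsum_congr fun j => ?_
    rw [poissonPMF, hcdef]
    push_cast [Complex.ofReal_exp]
    ring
  rw [Finset.sum_congr rfl hterm, hswap]
  have : ∑' n : ℕ, ∑ j ∈ Finset.range M, c n * z n ^ j = (M : ℂ) * ∑' j : ℕ, c (k + j * M) := by
    rw [← hreindex, ← tsum_mul_left]
    refine tsum_congr fun n => ?_
    rw [← Finset.mul_sum, hgeom n]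
    split <;> ring
  rw [this, hlhs]
  field_simp

/-- For a Poisson random variable with mean `μ`, modulus `M ≥ 2`, and any `0 ≤ k < M`,
the deviation satisfies
`|P(n mod M = k) − 1/M| ≤ (1/M) ∑_{j=1}^{M−1} exp (−2 μ sin² (π j / M))`. -/
theorem poisson_mod_deviation_sum_bound (μ : ℝ) (hμ : 0 < μ) (M : ℕ) (hM : 2 ≤ M)
    (k : ℕ) (hk : k < M) :
    |poissonMod μ M k - 1 / M| ≤
      (1 / M) * ∑ j ∈ Finset.Icc 1 (M - 1), Real.exp (-2 * μ * Real.sin (π * j / M) ^ 2) := by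
  have hMne : M ≠ 0 := by omega
  have hMR : (0:ℝ) < M := by positivity
  have hM0 : (M : ℂ) ≠ 0 := Nat.cast_ne_zero.mpr hMne
  set ω : ℂ := Complex.exp (2 * π * Complex.I / M) with hωdef
  set a : ℕ → ℂ := fun j => (ω ^ (j * k))⁻¹ * Complex.exp ((μ:ℂ) * (ω ^ j - 1)) with hadef
  have key : ((poissonMod μ M k : ℝ) : ℂ) = (1 / M) * ∑ j ∈ Finset.range M, a j :=
    poissonMod_fourier μ M k hM hk
  have hins : Finset.range M = insert 0 (Finset.Icc 1 (M - 1)) := by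
    ext x; simp only [Finset.mem_range, Finset.mem_insert, Finset.mem_Icc]; omega
  have h0 : a 0 = 1 := by simp [hadef]
  have hsum0 : ∑ j ∈ Finset.range M, a j = 1 + ∑ j ∈ Finset.Icc 1 (M - 1), a j := by
    rw [hins, Finset.sum_insert (by simp), h0]
  set T : ℂ := ∑ j ∈ Finset.Icc 1 (M - 1), a j with hTdef
  have hdev : ((poissonMod μ M k - 1 / M : ℝ) : ℂ) = (1 / M) * T := by
    push_cast
    rw [key, hsum0]
    field_simp
    ring
  have habs : |poissonMod μ M k - 1 / M| = ‖(1 / M : ℂ) * T‖ := by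
    rw [← hdev, Complex.norm_real, Real.norm_eq_abs]
  rw [habs, norm_mul]
  have h1M : ‖(1 / M : ℂ)‖ = 1 / M := by
    simp [norm_div]
  rw [h1M]
  have hbound : ‖T‖ ≤
      ∑ j ∈ Finset.Icc 1 (M - 1), Real.exp (-2 * μ * Real.sin (π * j / M) ^ 2) := by
    refine (norm_sum_le _ _).trans ?_
    refine Finset.sum_le_sum fun j hj => ?_
    have habsω : ‖ω‖ = 1 := by
      rw [hωdef, Complex.norm_exp]
      norm_num [Complex.div_re]
    have hainv : ‖(ω ^ (j * k))⁻¹‖ = 1 := by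
      rw [norm_inv, norm_pow, habsω, one_pow, inv_one]
    have hωj : ω ^ j = Complex.exp (((2 * π * j / M : ℝ) : ℂ) * Complex.I) := by
      rw [hωdef, ← Complex.exp_nat_mul]
      congr 1
      push_cast
      ring
    have hre : ((μ:ℂ) * (ω ^ j - 1)).re = μ * (Real.cos (2 * π * j / M) - 1) := by
      rw [hωj]
      simp only [Complex.mul_re, Complex.ofReal_re, Complex.ofReal_im, Complex.sub_re,
        Complex.sub_im, Complex.one_re, Complex.one_im, Complex.exp_ofReal_mul_I_re]
      ring
    have htrig : μ * (Real.cos (2 * π * j / M) - 1) = -2 * μ * Real.sin (π * j / M) ^ 2 := by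
      have := Real.sin_sq_eq_half_sub (π * j / M)
      have h2 : 2 * (π * j / M) = 2 * π * j / M := by ring
      rw [h2] at this
      rw [this]
      ring
    rw [hadef]
    simp only [norm_mul, hainv, one_mul, Complex.norm_exp, hre, htrig]
    exact le_refl _
  calc (1 / M : ℝ) * ‖T‖ ≤ (1 / M) * ∑ j ∈ Finset.Icc 1 (M - 1),
      Real.exp (-2 * μ * Real.sin (π * j / M) ^ 2) := by
        apply mul_le_mul_of_nonneg_left hbound (by positivity)
end

section
/- For any modulus M ≥ 2 and target error ε ∈ (0, (M−1)/M), if μ ≥ ln((M−1)/(M ε)) / (2 sin²(π/M)), then max_k |P(n mod M = k) − 1/M| ≤ ε for n ~ Poisson(μ). -/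
open scoped Real

/-- Sum of powers of a primitive `M`-th root of unity. -/
lemma aux_root_sum (M : ℕ) (hM : 2 ≤ M) (m : ℕ) :
    ∑ r ∈ Finset.range M, Complex.exp (2 * π * Complex.I / M) ^ (r * m)
      = if M ∣ m then (M : ℂ) else 0 := by
  have hM0 : M ≠ 0 := by omega
  have hprim := Complex.isPrimitiveRoot_exp M hM0
  set ω := Complex.exp (2 * π * Complex.I / M) with hω
  by_cases h : M ∣ m
  · simp only [h, if_true]
    have h1 : ω ^ m = 1 := (hprim.pow_eq_one_iff_dvd m).2 h
    calc ∑ r ∈ Finset.range M, ω ^ (r * m)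
        = ∑ _r ∈ Finset.range M, (1 : ℂ) := by
          refine Finset.sum_congr rfl fun r _ => ?_
          rw [mul_comm, pow_mul, h1, one_pow]
      _ = M := by simp
  · simp only [h, if_false]
    have hne : ω ^ m ≠ 1 := fun hh => h ((hprim.pow_eq_one_iff_dvd m).1 hh)
    have h2 : (ω ^ m) ^ M = 1 := by
      rw [← pow_mul, mul_comm, pow_mul, (hprim.pow_eq_one_iff_dvd M).2 dvd_rfl, one_pow]
    calc ∑ r ∈ Finset.range M, ω ^ (r * m)
        = ∑ r ∈ Finset.range M, (ω ^ m) ^ r := by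
          refine Finset.sum_congr rfl fun r _ => ?_
          rw [← pow_mul, mul_comm]
      _ = ((ω ^ m) ^ M - 1) / (ω ^ m - 1) := geom_sum_eq hne M
      _ = 0 := by rw [h2, sub_self, zero_div]

/-- The roots of unity filter identity for the Poisson modular probability. -/
lemma aux_key (μ : ℝ) (M k : ℕ) (hM : 2 ≤ M) (hk : k < M) :
    ((poissonMod μ M k : ℝ) : ℂ) * M
      = ∑ r ∈ Finset.range M,
          Complex.exp ((μ : ℂ) * Complex.exp (2 * π * Complex.I / M) ^ r - μ) *
            Complex.exp (2 * π * Complex.I / M) ^ (r * (M - k)) := by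
  set ω := Complex.exp (2 * π * Complex.I / M) with hω
  set c : ℕ → ℂ := fun n => Complex.exp (-(μ : ℂ)) * (μ : ℂ) ^ n / n.factorial with hc
  set f : ℕ → ℕ → ℂ := fun r n =>
    Complex.exp (-(μ : ℂ)) * (((μ : ℂ) * ω ^ r) ^ n / n.factorial) * ω ^ (r * (M - k)) with hf
  have hs : ∀ r, Summable (f r) := fun r =>
    ((NormedSpace.expSeries_div_summable ((μ : ℂ) * ω ^ r)).mul_left _).mul_right _
  have hterm : ∀ r, Complex.exp ((μ : ℂ) * ω ^ r - μ) * ω ^ (r * (M - k)) = ∑' n, f r n := by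
    intro r
    have hE : Complex.exp ((μ : ℂ) * ω ^ r) = ∑' n : ℕ, ((μ : ℂ) * ω ^ r) ^ n / n.factorial := by
      rw [Complex.exp_eq_exp_ℂ, NormedSpace.exp_eq_tsum_div]
    rw [sub_eq_add_neg, add_comm, Complex.exp_add, hE, ← tsum_mul_left, ← tsum_mul_right]
  have hfc : ∀ r n, f r n = c n * ω ^ (r * (n + (M - k))) := by
    intro r n
    simp only [hf, hc]
    rw [Nat.mul_add, pow_add, mul_pow, pow_mul]
    ring
  set g : ℕ → ℂ := fun n => c n * (if M ∣ (n + (M - k)) then (M : ℂ) else 0) with hg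
  have hswap : ∑ r ∈ Finset.range M,
      Complex.exp ((μ : ℂ) * ω ^ r - μ) * ω ^ (r * (M - k)) = ∑' n, g n := by
    calc ∑ r ∈ Finset.range M, Complex.exp ((μ : ℂ) * ω ^ r - μ) * ω ^ (r * (M - k))
        = ∑ r ∈ Finset.range M, ∑' n, f r n := Finset.sum_congr rfl fun r _ => hterm r
      _ = ∑' n, ∑ r ∈ Finset.range M, f r n := (Summable.tsum_finsetSum fun r _ => hs r).symm
      _ = ∑' n, g n := by
          refine tsum_congr fun n => ?_
          calc ∑ r ∈ Finset.range M, f r n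
              = ∑ r ∈ Finset.range M, c n * ω ^ (r * (n + (M - k))) :=
                Finset.sum_congr rfl fun r _ => hfc r n
            _ = c n * ∑ r ∈ Finset.range M, ω ^ (r * (n + (M - k))) := by
                rw [Finset.mul_sum]
            _ = g n := by rw [aux_root_sum M hM (n + (M - k))]
  rw [hswap]
  -- now compute the tsum of g via the injection j ↦ k + j * M
  have hinj : Function.Injective (fun j : ℕ => k + j * M) := by
    intro a b h
    have hM0 : 0 < M := by omega
    have := Nat.add_left_cancel h
    exact Nat.eq_of_mul_eq_mul_right hM0 this
  have hsupp : Function.support g ⊆ Set.range (fun j : ℕ => k + j * M) := by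
    intro n hn
    simp only [Function.mem_support, hg] at hn
    by_cases h : M ∣ (n + (M - k))
    · have h' : (n + (M - k)) % M = 0 % M := (Nat.modEq_zero_iff_dvd.2 h)
      have h1 : (n + (M - k)) + k ≡ 0 + k [MOD M] := Nat.ModEq.add_right k h'
      have h2 : (n + (M - k)) + k = n + M := by omega
      have h3 : n + M ≡ k [MOD M] := by rwa [h2, Nat.zero_add] at h1
      have h4 : n ≡ k [MOD M] := by
        have : n + M ≡ n + 0 [MOD M] := Nat.ModEq.add_left n (Nat.modEq_zero_iff_dvd.2 dvd_rfl)
        exact (this.symm.trans h3)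
      have h5 : n % M = k := by
        have := h4
        unfold Nat.ModEq at this
        rwa [Nat.mod_eq_of_lt hk] at this
      refine ⟨n / M, ?_⟩
      simp only
      rw [← h5]
      exact (Nat.mod_add_div' n M)
    · exact absurd (by simp [h]) hn
  have htsum_g : ∑' n, g n = ((poissonMod μ M k : ℝ) : ℂ) * M := by
    rw [← hinj.tsum_eq hsupp]
    have hgj : ∀ j : ℕ, g (k + j * M) = (poissonPMF μ (k + j * M) : ℂ) * M := by
      intro j
      have hdvd : M ∣ (k + j * M + (M - k)) := by
        refine ⟨j + 1, ?_⟩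
        have h2 : k + j * M + (M - k) = j * M + M := by omega
        rw [h2]; ring
      simp only [hg, hc, hdvd, if_true, poissonPMF]
      push_cast
      ring
    calc ∑' j, g (k + j * M) = ∑' j : ℕ, (poissonPMF μ (k + j * M) : ℂ) * M := by
          exact tsum_congr hgj
      _ = (∑' j : ℕ, (poissonPMF μ (k + j * M) : ℂ)) * M := tsum_mul_right
      _ = ((poissonMod μ M k : ℝ) : ℂ) * M := by
          rw [poissonMod, Complex.ofReal_tsum]
  rw [htsum_g]

/-- Lower bound for the sine on the relevant range. -/
lemma aux_sin_lower (M : ℕ) (hM : 2 ≤ M) (x : ℝ) (h1 : π / M ≤ x) (h2 : x ≤ π - π / M) :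
    Real.sin (π / M) ≤ Real.sin x := by
  have hπ : 0 < π := Real.pi_pos
  have hMpos : (0 : ℝ) < M := by positivity
  have hπM0 : 0 < π / M := by positivity
  have hπM2 : π / M ≤ π / 2 := by
    apply div_le_div_of_nonneg_left hπ.le (by norm_num)
    exact_mod_cast hM
  rcases le_or_gt x (π / 2) with h | h
  · exact Real.strictMonoOn_sin.monotoneOn
      ⟨by linarith, hπM2⟩ ⟨by linarith, h⟩ h1
  · rw [← Real.sin_pi_sub x]
    exact Real.strictMonoOn_sin.monotoneOn
      ⟨by linarith, hπM2⟩ ⟨by linarith, by linarith⟩ (by linarith)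

/-- For any modulus `M ≥ 2` and target error `ε ∈ (0, (M−1)/M)`, if
`μ ≥ ln ((M−1)/(M ε)) / (2 sin² (π/M))`, then
`max_k |P(n mod M = k) − 1/M| ≤ ε` for `n ∼ Poisson(μ)`. -/
theorem poisson_mod_mu_requirement (M : ℕ) (hM : 2 ≤ M) (ε : ℝ)
    (hε0 : 0 < ε) (hε1 : ε < (M - 1) / M) (μ : ℝ)
    (hμ : μ ≥ Real.log ((M - 1) / (M * ε)) / (2 * Real.sin (π / M) ^ 2)) :
    ∀ k < M, |poissonMod μ M k - 1 / M| ≤ ε := by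
  intro k hk
  have hπ : 0 < π := Real.pi_pos
  have hMpos : (0 : ℝ) < M := by positivity
  have hM1 : (1 : ℝ) ≤ (M : ℝ) - 1 := by
    have : (2 : ℝ) ≤ M := by exact_mod_cast hM
    linarith
  have hπM0 : 0 < π / M := by positivity
  have hπMπ : π / M < π := by
    rw [div_lt_iff₀ hMpos]
    nlinarith
  have hsin0 : 0 < Real.sin (π / M) :=
    Real.sin_pos_of_pos_of_lt_pi hπM0 hπMπ
  set s : ℝ := 2 * Real.sin (π / M) ^ 2 with hs
  have hs0 : 0 < s := by positivity
  -- μ is at least log c / s with c > 1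
  have hMε : (M : ℝ) * ε < (M : ℝ) - 1 := by
    rw [lt_div_iff₀ hMpos] at hε1
    linarith
  have hc1 : 1 < ((M : ℝ) - 1) / (M * ε) := by
    rw [lt_div_iff₀ (by positivity)]
    linarith
  have hμ0 : 0 ≤ μ := by
    have hlog : 0 ≤ Real.log (((M : ℝ) - 1) / (M * ε)) := Real.log_nonneg hc1.le
    have : 0 ≤ Real.log (((M : ℝ) - 1) / (M * ε)) / s := div_nonneg hlog hs0.le
    linarith [hμ]
  -- the key bound on the exponential
  have hexp_bound : Real.exp (-(μ * s)) ≤ (M * ε) / ((M : ℝ) - 1) := by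
    have h1 : Real.log (((M : ℝ) - 1) / (M * ε)) ≤ μ * s := by
      rw [ge_iff_le, div_le_iff₀ hs0] at hμ
      exact hμ
    have h2 : Real.exp (-(μ * s)) ≤ Real.exp (-Real.log (((M : ℝ) - 1) / (M * ε))) :=
      Real.exp_le_exp.2 (by linarith)
    have h3 : Real.exp (-Real.log (((M : ℝ) - 1) / (M * ε))) = (M * ε) / ((M : ℝ) - 1) := by
      rw [Real.exp_neg, Real.exp_log (by positivity)]
      rw [inv_div]
    linarith [h2, h3.le, h3.ge]
  -- set up the complex analysis
  set ω := Complex.exp (2 * π * Complex.I / M) with hω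
  have hkey := aux_key μ M k hM hk
  -- split off the r = 0 term
  have hsplit : ∑ r ∈ Finset.range M,
      Complex.exp ((μ : ℂ) * ω ^ r - μ) * ω ^ (r * (M - k))
      = 1 + ∑ r ∈ Finset.Ico 1 M, Complex.exp ((μ : ℂ) * ω ^ r - μ) * ω ^ (r * (M - k)) := by
    rw [Finset.range_eq_Ico, Finset.sum_eq_sum_Ico_succ_bot (by omega)]
    simp
  set T := ∑ r ∈ Finset.Ico 1 M, Complex.exp ((μ : ℂ) * ω ^ r - μ) * ω ^ (r * (M - k)) with hT
  -- bound each term of T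
  have hterm_bound : ∀ r ∈ Finset.Ico 1 M,
      ‖Complex.exp ((μ : ℂ) * ω ^ r - μ) * ω ^ (r * (M - k))‖ ≤ Real.exp (-(μ * s)) := by
    intro r hr
    rw [Finset.mem_Ico] at hr
    have hωr : ω ^ r = Complex.exp ((2 * π * r / M : ℝ) * Complex.I) := by
      rw [hω, ← Complex.exp_nat_mul]
      congr 1
      push_cast
      ring
    have hre : (ω ^ r).re = Real.cos (2 * π * r / M) := by
      rw [hωr, Complex.exp_ofReal_mul_I_re]
    have habs1 : ‖ω ^ (r * (M - k))‖ = 1 := by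
      set m := r * (M - k) with hm
      rw [hω, ← Complex.exp_nat_mul]
      rw [Complex.norm_exp]
      have : ((m : ℕ) : ℂ) * (2 * π * Complex.I / M)
          = ((2 * π * (m : ℝ) / M : ℝ)) * Complex.I := by
        push_cast
        ring
      rw [this, Complex.re_ofReal_mul, Complex.I_re]
      simp
    have habs2 : ‖Complex.exp ((μ : ℂ) * ω ^ r - μ)‖
        = Real.exp (μ * Real.cos (2 * π * r / M) - μ) := by
      rw [Complex.norm_exp]
      congr 1
      rw [Complex.sub_re, Complex.ofReal_re, Complex.mul_re, Complex.ofReal_re,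
        Complex.ofReal_im, hre]
      ring
    rw [norm_mul, habs1, habs2, mul_one]
    rw [Real.exp_le_exp]
    -- cos(2πr/M) - 1 = -2 sin²(πr/M)
    have hcos : Real.cos (2 * π * r / M) = 1 - 2 * Real.sin (π * r / M) ^ 2 := by
      have h := Real.sin_sq_eq_half_sub (π * r / M)
      have h2 : 2 * (π * r / M) = 2 * π * r / M := by ring
      rw [h2] at h
      linarith
    have hsinr : Real.sin (π / M) ≤ Real.sin (π * r / M) := by
      apply aux_sin_lower M hM
      · have h1r : (1 : ℝ) ≤ (r : ℝ) := by exact_mod_cast hr.1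
        have he : π / (M : ℝ) = π * 1 / M := by ring
        rw [he]
        gcongr
      · have hrM : (r : ℝ) ≤ (M : ℝ) - 1 := by
          have : (r : ℝ) + 1 ≤ M := by exact_mod_cast hr.2
          linarith
        have hle : π * r / M ≤ π * ((M : ℝ) - 1) / M := by gcongr
        calc π * r / M ≤ π * ((M : ℝ) - 1) / M := hle
          _ = π - π / M := by field_simp
    have hsinr_nonneg : 0 ≤ Real.sin (π / M) := hsin0.le
    have hsq : Real.sin (π / M) ^ 2 ≤ Real.sin (π * r / M) ^ 2 := by
      apply pow_le_pow_left₀ hsinr_nonneg hsinr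
    rw [hcos, hs]
    nlinarith [mul_le_mul_of_nonneg_left hsq hμ0]
  -- bound ‖T‖
  have hTbound : ‖T‖ ≤ ((M : ℝ) - 1) * Real.exp (-(μ * s)) := by
    calc ‖T‖ ≤ ∑ r ∈ Finset.Ico 1 M,
          ‖Complex.exp ((μ : ℂ) * ω ^ r - μ) * ω ^ (r * (M - k))‖ := norm_sum_le _ _
      _ ≤ ∑ _r ∈ Finset.Ico 1 M, Real.exp (-(μ * s)) :=
          Finset.sum_le_sum hterm_bound
      _ = ((M : ℝ) - 1) * Real.exp (-(μ * s)) := by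
          rw [Finset.sum_const, Nat.card_Ico]
          have : ((M - 1 : ℕ) : ℝ) = (M : ℝ) - 1 := by
            push_cast [Nat.cast_sub (by omega : 1 ≤ M)]
            ring
          rw [nsmul_eq_mul, this]
  -- relate T to poissonMod
  have hTr : ((poissonMod μ M k * M - 1 : ℝ) : ℂ) = T := by
    push_cast
    rw [hkey, hsplit]
    ring
  have habsT : |poissonMod μ M k * M - 1| = ‖T‖ := by
    rw [← hTr, Complex.norm_real, Real.norm_eq_abs]
  -- conclude
  have hfinal : |poissonMod μ M k * M - 1| ≤ M * ε := by
    rw [habsT]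
    calc ‖T‖ ≤ ((M : ℝ) - 1) * Real.exp (-(μ * s)) := hTbound
      _ ≤ ((M : ℝ) - 1) * ((M * ε) / ((M : ℝ) - 1)) := by
          apply mul_le_mul_of_nonneg_left hexp_bound (by linarith)
      _ = M * ε := by field_simp
  have h6 : |poissonMod μ M k - 1 / M| * M = |poissonMod μ M k * M - 1| := by
    have hMabs : |poissonMod μ M k - 1 / M| * M
        = |poissonMod μ M k - 1 / M| * |(M : ℝ)| := by rw [abs_of_pos hMpos]
    rw [hMabs, ← abs_mul]
    congr 1
    field_simp
  rw [← h6] at hfinal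
  nlinarith [hfinal, hMpos]
end

section
/- (Conditional Min-Entropy Bound) Let R = n mod M where n ~ Poisson(μ) and M ≥ 2. Then the min-entropy H_min(R) = −log₂(max_r P(R = r)) satisfies H_min(R) ≥ log₂(M) − log₂(1 + (M−1) exp(−2μ sin²(π/M))). -/
open scoped Real

lemma mod_iff (M r n : ℕ) (hr : r < M) : n % M = r ↔ (M:ℤ) ∣ (n:ℤ) - r := by
  rw [Int.dvd_iff_emod_eq_zero, ← Int.emod_eq_emod_iff_emod_sub_eq_zero,
    Int.emod_eq_of_lt (Int.ofNat_nonneg r) (by exact_mod_cast hr)]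
  omega

lemma zeta_sum (M : ℕ) (hM : 2 ≤ M) (k : ℤ) :
    ∑ j ∈ Finset.range M, (Complex.exp (2 * ↑π * Complex.I / M) ^ k) ^ j
      = if (M : ℤ) ∣ k then (M : ℂ) else 0 := by
  have hM0 : M ≠ 0 := by omega
  have hprim := Complex.isPrimitiveRoot_exp M hM0
  set ζ := Complex.exp (2 * ↑π * Complex.I / M) with hζ
  by_cases h : (M:ℤ) ∣ k
  · have h1 : ζ ^ k = 1 := (hprim.zpow_eq_one_iff_dvd k).mpr h
    simp [h1, h]
  · have h1 : ζ ^ k ≠ 1 := fun e => h ((hprim.zpow_eq_one_iff_dvd k).mp e)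
    rw [geom_sum_eq h1]
    have h2 : (ζ ^ k) ^ M = 1 := by
      rw [← zpow_natCast (ζ ^ k) M, ← zpow_mul, mul_comm, zpow_mul, zpow_natCast,
        hprim.pow_eq_one, one_zpow]
    simp [h2, h]

lemma pow_aux (ζ : ℂ) (hζ : ζ ≠ 0) (r n j : ℕ) :
    (ζ ^ (-(r:ℤ)))^j * (ζ^j)^n = (ζ ^ ((n:ℤ) - r))^j := by
  rw [← zpow_natCast (ζ ^ (-(r:ℤ))) j, ← zpow_natCast (ζ ^ (j:ℕ)) n,
    ← zpow_natCast ζ j, ← zpow_mul, ← zpow_mul, ← zpow_add₀ hζ,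
    ← zpow_natCast (ζ ^ ((n:ℤ) - r)) j, ← zpow_mul]
  ring_nf

lemma summable_aux (μ : ℝ) (hμ : 0 < μ) (c w : ℂ) (hc : ‖c‖ = 1)
    (hw : ‖w‖ = 1) :
    Summable (fun n : ℕ => c * (w ^ n * ((μ:ℂ) ^ n / n.factorial))) := by
  refine Summable.of_norm_bounded
    (Real.summable_pow_div_factorial μ) fun n => le_of_eq ?_
  rw [norm_mul, norm_mul, norm_pow, norm_div, norm_pow]
  simp [hc, hw, Complex.norm_real, Real.norm_eq_abs, abs_of_pos hμ, Complex.norm_natCast]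

lemma key_identity (μ : ℝ) (hμ : 0 < μ) (M r : ℕ) (hM : 2 ≤ M) (hr : r < M) :
    ∑ j ∈ Finset.range M,
      (Complex.exp (2 * ↑π * Complex.I / M) ^ (-(r:ℤ)))^j *
        Complex.exp ((μ:ℂ) * Complex.exp (2 * ↑π * Complex.I / M) ^ j)
      = M * ∑' n : ℕ, (if n % M = r then ((μ ^ n / n.factorial : ℝ) : ℂ) else 0) := by
  set ζ := Complex.exp (2 * ↑π * Complex.I / M) with hζdef
  have hζ0 : ζ ≠ 0 := Complex.exp_ne_zero _
  have habsζ : ‖ζ‖ = 1 := by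
    have : (2 * ↑π * Complex.I / M : ℂ) = ((2 * π / M : ℝ) : ℂ) * Complex.I := by
      push_cast; ring
    rw [hζdef, this, Complex.norm_exp_ofReal_mul_I]
  have hexp : ∀ j : ℕ, Complex.exp ((μ:ℂ) * ζ ^ j)
      = ∑' n : ℕ, (ζ ^ j) ^ n * ((μ:ℂ) ^ n / n.factorial) := by
    intro j
    rw [Complex.exp_eq_exp_ℂ, NormedSpace.exp_eq_tsum_div]
    show ∑' n : ℕ, ((μ:ℂ) * ζ ^ j) ^ n / n.factorial = _
    exact tsum_congr fun n => by rw [mul_pow]; ring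
  calc ∑ j ∈ Finset.range M, (ζ ^ (-(r:ℤ)))^j * Complex.exp ((μ:ℂ) * ζ ^ j)
      = ∑ j ∈ Finset.range M, ∑' n : ℕ,
          (ζ ^ (-(r:ℤ)))^j * ((ζ ^ j) ^ n * ((μ:ℂ) ^ n / n.factorial)) := by
        refine Finset.sum_congr rfl fun j _ => ?_
        rw [hexp j, tsum_mul_left]
    _ = ∑' n : ℕ, ∑ j ∈ Finset.range M,
          (ζ ^ (-(r:ℤ)))^j * ((ζ ^ j) ^ n * ((μ:ℂ) ^ n / n.factorial)) := by
        refine (Summable.tsum_finsetSum fun j _ => ?_).symm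
        exact summable_aux μ hμ _ _ (by simp [norm_pow, norm_zpow, habsζ]) (by simp [norm_pow, habsζ])
    _ = ∑' n : ℕ, ((μ:ℂ) ^ n / n.factorial) * ∑ j ∈ Finset.range M, (ζ ^ ((n:ℤ) - r)) ^ j := by
        congr 1; funext n
        rw [Finset.mul_sum]
        refine Finset.sum_congr rfl fun j _ => ?_
        rw [← mul_assoc, pow_aux ζ hζ0 r n j]; ring
    _ = ∑' n : ℕ, ((μ:ℂ) ^ n / n.factorial) * (if (M:ℤ) ∣ (n:ℤ) - r then (M:ℂ) else 0) := by
        congr 1; funext n; rw [zeta_sum M hM]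
    _ = M * ∑' n : ℕ, (if n % M = r then ((μ ^ n / n.factorial : ℝ) : ℂ) else 0) := by
        rw [← tsum_mul_left]
        congr 1; funext n
        by_cases h : n % M = r
        · rw [if_pos ((mod_iff M r n hr).mp h), if_pos h]
          push_cast; ring
        · rw [if_neg (fun hd => h ((mod_iff M r n hr).mpr hd)), if_neg h]
          ring

lemma sin_ge (M j : ℕ) (hM : 2 ≤ M) (hj1 : 1 ≤ j) (hjM : j < M) :
    Real.sin (π / M) ≤ Real.sin (π * j / M) := by
  have hMpos : (0:ℝ) < M := by positivity
  have hπ : (0:ℝ) < π := Real.pi_pos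
  have ha0 : 0 < π / M := by positivity
  have hM2 : (2:ℝ) ≤ M := by exact_mod_cast hM
  have hj1' : (1:ℝ) ≤ j := by exact_mod_cast hj1
  have ha2 : π / M ≤ π / 2 := by
    rw [div_le_div_iff₀ hMpos two_pos]; nlinarith
  have hax : π / M ≤ π * j / M := by
    rw [div_le_div_iff₀ hMpos hMpos]
    nlinarith [mul_le_mul_of_nonneg_left hj1' (by positivity : (0:ℝ) ≤ π * M)]
  have hxb : π * j / M ≤ π - π / M := by
    have hj' : (j:ℝ) ≤ (M:ℝ) - 1 := by
      have : (j:ℝ) + 1 ≤ M := by exact_mod_cast hjM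
      linarith
    rw [div_le_iff₀ hMpos]
    calc π * j ≤ π * ((M:ℝ) - 1) := by nlinarith
      _ = (π - π / M) * M := by field_simp
  have mono := Real.strictMonoOn_sin.monotoneOn
  by_cases hc : π * j / M ≤ π / 2
  · exact mono ⟨by linarith, ha2⟩ ⟨by linarith, hc⟩ hax
  · rw [← Real.sin_pi_sub (π * j / M)]
    exact mono ⟨by linarith, ha2⟩ ⟨by linarith, by linarith⟩ (by linarith)

lemma cos_bound (μ : ℝ) (hμ : 0 < μ) (M j : ℕ) (hM : 2 ≤ M) (hj1 : 1 ≤ j) (hjM : j < M) :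
    μ * Real.cos (2 * π * j / M) - μ ≤ -2 * μ * Real.sin (π / M) ^ 2 := by
  have hcos : Real.cos (2 * π * j / M) = 1 - 2 * Real.sin (π * j / M) ^ 2 := by
    have h2 : 2 * π * j / M = 2 * (π * j / M) := by ring
    rw [h2, Real.cos_two_mul']
    nlinarith [Real.sin_sq_add_cos_sq (π * j / M)]
  have hs := sin_ge M j hM hj1 hjM
  have hs0 : 0 ≤ Real.sin (π / M) := by
    apply Real.sin_nonneg_of_nonneg_of_le_pi
    · positivity
    · rw [div_le_iff₀ (by positivity)]
      have hM2 : (2:ℝ) ≤ M := by exact_mod_cast hM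
      nlinarith [Real.pi_pos]
  rw [hcos]
  nlinarith [mul_le_mul_of_nonneg_left (pow_le_pow_left₀ hs0 hs 2) hμ.le]

lemma inj_aux (M r : ℕ) (hM : 0 < M) : Function.Injective (fun j : ℕ => r + j * M) := by
  intro a b h
  simp only at h
  have : a * M = b * M := by omega
  exact Nat.eq_of_mul_eq_mul_right hM this

lemma summable_pmf (μ : ℝ) : Summable (poissonPMF μ) := by
  refine ((Real.summable_pow_div_factorial μ).mul_left (Real.exp (-μ))).congr fun n => ?_
  simp only [poissonPMF]; ring

lemma pmf_nonneg (μ : ℝ) (hμ : 0 < μ) (k : ℕ) : 0 ≤ poissonPMF μ k := by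
  unfold poissonPMF; positivity

lemma main_bound (μ : ℝ) (hμ : 0 < μ) (M r : ℕ) (hM : 2 ≤ M) (hr : r < M) :
    poissonMod μ M r ≤
      (1 + ((M:ℝ) - 1) * Real.exp (-2 * μ * Real.sin (π / M) ^ 2)) / M := by
  set δ := Real.exp (-2 * μ * Real.sin (π / M) ^ 2) with hδ
  set A := 1 + ((M:ℝ) - 1) * δ with hA
  set ζ := Complex.exp (2 * ↑π * Complex.I / M) with hζdef
  have hζ0 : ζ ≠ 0 := Complex.exp_ne_zero _
  have habsζ : ‖ζ‖ = 1 := by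
    have h : (2 * ↑π * Complex.I / M : ℂ) = ((2 * π / M : ℝ) : ℂ) * Complex.I := by
      push_cast; ring
    rw [hζdef, h, Complex.norm_exp_ofReal_mul_I]
  have hMpos : (0:ℝ) < M := by positivity
  set q : ℕ → ℝ := fun n => μ ^ n / n.factorial with hq
  have hqsum : Summable q := Real.summable_pow_div_factorial μ
  have hqnn : ∀ n, 0 ≤ q n := fun n => by simp only [hq]; positivity
  set s : ℝ := ∑' n : ℕ, (if n % M = r then q n else 0) with hs
  have hite_nn : ∀ n, 0 ≤ (if n % M = r then q n else 0) := by
    intro n; split_ifs; exacts [hqnn n, le_rfl]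
  have hgsum : Summable (fun n => if n % M = r then q n else 0) :=
    Summable.of_nonneg_of_le hite_nn
      (fun n => by split_ifs; exacts [le_rfl, hqnn n]) hqsum
  have hsnn : 0 ≤ s := tsum_nonneg hite_nn
  have hinj := inj_aux M r (by omega)
  -- Step A : poissonMod ≤ exp(-μ) * s
  have stepA : poissonMod μ M r ≤ Real.exp (-μ) * s := by
    have hrewrite : Real.exp (-μ) * s = ∑' n : ℕ, (if n % M = r then poissonPMF μ n else 0) := by
      rw [hs, ← tsum_mul_left]
      congr 1; funext n
      split_ifs
      · simp only [poissonPMF, hq]; ring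
      · simp
    rw [hrewrite]
    refine Summable.tsum_le_tsum_of_inj (fun j : ℕ => r + j * M) hinj
      (fun c _ => by split_ifs; exacts [pmf_nonneg μ hμ c, le_rfl])
      (fun j => ?_) ((summable_pmf μ).comp_injective hinj)
      (Summable.of_nonneg_of_le (fun n => by split_ifs; exacts [pmf_nonneg μ hμ n, le_rfl])
        (fun n => by split_ifs; exacts [le_rfl, pmf_nonneg μ hμ n]) (summable_pmf μ))
    have hmod : (r + j * M) % M = r := by
      rw [Nat.add_mul_mod_self_right, Nat.mod_eq_of_lt hr]
    rw [hmod]; simp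
  -- Step B : M * s ≤ exp μ * A
  have stepB : (M:ℝ) * s ≤ Real.exp μ * A := by
    have hkey := key_identity μ hμ M r hM hr
    have hcast : (((s:ℝ)):ℂ) = ∑' n : ℕ, (if n % M = r then ((q n : ℝ) : ℂ) else 0) := by
      rw [hs, Complex.ofReal_tsum]
      congr 1; funext n; split_ifs <;> simp
    have hMs : (M:ℝ) * s = ‖(M:ℂ) * ((s:ℝ):ℂ)‖ := by
      rw [← Complex.ofReal_natCast, ← Complex.ofReal_mul, Complex.norm_real, Real.norm_eq_abs,
        abs_of_nonneg (by positivity)]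
    have habs_term : ∀ j : ℕ,
        ‖(ζ ^ (-(r:ℤ)))^j * Complex.exp ((μ:ℂ) * ζ ^ j)‖
          = Real.exp (μ * Real.cos (2 * π * j / M)) := by
      intro j
      have hζj : ζ ^ j = Complex.exp (((2 * π * j / M : ℝ) : ℂ) * Complex.I) := by
        rw [hζdef, ← Complex.exp_nat_mul]; congr 1; push_cast; ring
      have hre : ((μ:ℂ) * ζ ^ j).re = μ * Real.cos (2 * π * j / M) := by
        rw [hζj, Complex.re_ofReal_mul, Complex.exp_ofReal_mul_I_re]
      have h1 : ‖(ζ ^ (-(r:ℤ)))^j‖ = 1 := by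
        rw [norm_pow, norm_zpow, habsζ]; simp
      rw [norm_mul, h1, one_mul, Complex.norm_exp, hre]
    have hsum_bound : ∑ j ∈ Finset.range M, Real.exp (μ * Real.cos (2 * π * j / M))
        ≤ Real.exp μ * A := by
      conv_lhs => rw [show M = (M - 1) + 1 from by omega]
      rw [Finset.sum_range_succ']
      simp only [show M - 1 + 1 = M from by omega]
      have h0 : Real.exp (μ * Real.cos (2 * π * (0:ℕ) / M)) = Real.exp μ := by
        norm_num
      have hterm : ∀ j ∈ Finset.range (M - 1),
          Real.exp (μ * Real.cos (2 * π * (j+1:ℕ) / M)) ≤ Real.exp μ * δ := by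
        intro j hj
        have hjm := Finset.mem_range.mp hj
        have := cos_bound μ hμ M (j+1) hM (by omega) (by omega)
        calc Real.exp (μ * Real.cos (2 * π * (j+1:ℕ) / M))
            = Real.exp μ * Real.exp (μ * Real.cos (2 * π * (j+1:ℕ) / M) - μ) := by
              rw [← Real.exp_add]; ring_nf
          _ ≤ Real.exp μ * δ := by
              refine mul_le_mul_of_nonneg_left ?_ (Real.exp_pos μ).le
              rw [hδ]
              apply Real.exp_le_exp.mpr
              exact_mod_cast this
      have hsum : ∑ j ∈ Finset.range (M - 1), Real.exp (μ * Real.cos (2 * π * (j+1:ℕ) / M))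
          ≤ ((M:ℝ) - 1) * (Real.exp μ * δ) := by
        calc ∑ j ∈ Finset.range (M - 1), Real.exp (μ * Real.cos (2 * π * (j+1:ℕ) / M))
            ≤ ∑ _j ∈ Finset.range (M - 1), Real.exp μ * δ := Finset.sum_le_sum hterm
          _ = ((M - 1 : ℕ) : ℝ) * (Real.exp μ * δ) := by
              rw [Finset.sum_const, Finset.card_range]; simp
          _ = ((M:ℝ) - 1) * (Real.exp μ * δ) := by
              congr 1; push_cast [Nat.cast_sub (by omega : 1 ≤ M)]; ring
      rw [h0, hA]
      have hring : Real.exp μ * (1 + ((M:ℝ) - 1) * δ)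
          = ((M:ℝ) - 1) * (Real.exp μ * δ) + Real.exp μ := by ring
      rw [hring]
      exact add_le_add hsum le_rfl
    calc (M:ℝ) * s = ‖(M:ℂ) * ((s:ℝ):ℂ)‖ := hMs
      _ = ‖∑ j ∈ Finset.range M,
            (ζ ^ (-(r:ℤ)))^j * Complex.exp ((μ:ℂ) * ζ ^ j)‖ := by
          rw [hcast, ← hkey]
      _ ≤ ∑ j ∈ Finset.range M,
            ‖(ζ ^ (-(r:ℤ)))^j * Complex.exp ((μ:ℂ) * ζ ^ j)‖ :=
          norm_sum_le _ _
      _ = ∑ j ∈ Finset.range M, Real.exp (μ * Real.cos (2 * π * j / M)) :=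
          Finset.sum_congr rfl fun j _ => habs_term j
      _ ≤ Real.exp μ * A := hsum_bound
  -- conclude
  have hsle : s ≤ Real.exp μ * A / M := by
    rw [le_div_iff₀ hMpos]; linarith
  calc poissonMod μ M r ≤ Real.exp (-μ) * s := stepA
    _ ≤ Real.exp (-μ) * (Real.exp μ * A / M) :=
        mul_le_mul_of_nonneg_left hsle (Real.exp_pos _).le
    _ = A / M := by
        rw [Real.exp_neg]
        field_simp

/-- **Conditional Min-Entropy Bound.** For `R = n mod M` with `n ∼ Poisson(μ)` and
`M ≥ 2`, the min-entropy `H_min(R) = −log₂ (max_r P(R = r))` satisfies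
`H_min(R) ≥ log₂ M − log₂ (1 + (M−1) exp (−2 μ sin² (π/M)))`. -/
theorem poisson_mod_min_entropy_bound (μ : ℝ) (hμ : 0 < μ) (M : ℕ) (hM : 2 ≤ M) :
    -Real.logb 2
        ((Finset.range M).sup'
          (Finset.nonempty_range_iff.mpr (by omega)) (fun r => poissonMod μ M r)) ≥
      Real.logb 2 M -
        Real.logb 2 (1 + (M - 1) * Real.exp (-2 * μ * Real.sin (π / M) ^ 2)) := by
  set A := 1 + ((M:ℝ) - 1) * Real.exp (-2 * μ * Real.sin (π / M) ^ 2) with hA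
  set m := (Finset.range M).sup'
    (Finset.nonempty_range_iff.mpr (by omega : M ≠ 0)) (fun r => poissonMod μ M r) with hm
  have hMpos : (0:ℝ) < M := by positivity
  have hM2 : (2:ℝ) ≤ M := by exact_mod_cast hM
  have hA1 : (1:ℝ) ≤ A := by
    rw [hA]
    have := Real.exp_pos (-2 * μ * Real.sin (π / M) ^ 2)
    nlinarith
  have hA0 : (0:ℝ) < A := by linarith
  have hsup_le : m ≤ A / M :=
    Finset.sup'_le _ _ fun r hrm => main_bound μ hμ M r hM (Finset.mem_range.mp hrm)
  have hm_pos : 0 < m := by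
    have h1 : poissonPMF μ (0 + 0 * M) ≤ poissonMod μ M 0 :=
      Summable.le_tsum ((summable_pmf μ).comp_injective (inj_aux M 0 (by omega))) 0
        (fun j _ => pmf_nonneg μ hμ _)
    have h2 : 0 < poissonPMF μ (0 + 0 * M) := by
      unfold poissonPMF; positivity
    have h3 : poissonMod μ M 0 ≤ m :=
      Finset.le_sup' (fun r => poissonMod μ M r) (Finset.mem_range.mpr (by omega : 0 < M))
    linarith
  have hAM : (0:ℝ) < A / M := by positivity
  have hlog : Real.logb 2 m ≤ Real.logb 2 (A / M) :=
    (Real.logb_le_logb one_lt_two hm_pos hAM).mpr hsup_le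
  rw [Real.logb_div (ne_of_gt hA0) (ne_of_gt hMpos)] at hlog
  linarith
end

section
/- For n ~ Poisson(μ) and M ≥ 2, the total variation distance between the distribution of n mod M and the uniform distribution on {0,...,M−1} is at most ((M−1)/2) exp(−2μ sin²(π/M)). -/
open scoped Real

lemma poisson_gen (μ : ℝ) (z : ℂ) :
    HasSum (fun n : ℕ => (poissonPMF μ n : ℂ) * z ^ n) (Complex.exp ((μ:ℂ) * z - μ)) := by
  have h : HasSum (fun n : ℕ => ((μ : ℂ) * z) ^ n / n.factorial) (Complex.exp ((μ:ℂ) * z)) := by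
    have hs := NormedSpace.expSeries_div_summable ((μ : ℂ) * z)
    have := hs.hasSum
    have he : Complex.exp ((μ:ℂ)*z) = ∑' (n : ℕ), ((μ:ℂ)*z) ^ n / n.factorial := by
      rw [Complex.exp_eq_exp_ℂ, NormedSpace.exp_eq_tsum_div]
    rwa [← he] at this
  have h2 := h.mul_left (Complex.exp (-(μ:ℂ)))
  have : Complex.exp (-(μ:ℂ)) * Complex.exp ((μ:ℂ)*z) = Complex.exp ((μ:ℂ)*z - μ) := by
    rw [← Complex.exp_add]; ring_nf
  rw [this] at h2
  have hf : (fun n : ℕ => (poissonPMF μ n : ℂ) * z ^ n) =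
      fun n : ℕ => Complex.exp (-(μ:ℂ)) * (((μ : ℂ) * z) ^ n / n.factorial) := by
    funext n
    unfold poissonPMF
    push_cast [Complex.ofReal_exp]
    rw [mul_pow]
    ring
  rw [hf]; exact h2

lemma zeta_pow_eq_one_iff (M : ℕ) (hM : 2 ≤ M) (d : ℤ) :
    Complex.exp (2 * π * Complex.I / M) ^ d = 1 ↔ (M : ℤ) ∣ d := by
  have hM0 : (M : ℂ) ≠ 0 := Nat.cast_ne_zero.mpr (by omega)
  have h2 : (2 * (π:ℂ) * Complex.I) ≠ 0 := by
    simp [Real.pi_ne_zero, Complex.I_ne_zero, Complex.ofReal_ne_zero]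
  rw [← Complex.exp_int_mul, Complex.exp_eq_one_iff]
  constructor
  · rintro ⟨n, hn⟩
    refine ⟨n, ?_⟩
    have : (d : ℂ) = (M : ℂ) * n := by
      field_simp at hn
      have := mul_right_cancel₀ h2 (by linear_combination (2 * (π:ℂ) * Complex.I) * hn : (d:ℂ) * (2 * (π:ℂ) * Complex.I) = ((M:ℂ) * n) * (2 * (π:ℂ) * Complex.I))
      exact this
    exact_mod_cast this
  · rintro ⟨n, rfl⟩
    exact ⟨n, by field_simp <;> push_cast <;> ring⟩

lemma mod_iff_int_dvd (M n k : ℕ) (hk : k < M) :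
    n % M = k ↔ (M : ℤ) ∣ ((n : ℤ) - k) := by
  rw [← Nat.modEq_iff_dvd]
  unfold Nat.ModEq
  rw [Nat.mod_eq_of_lt hk]
  exact eq_comm

lemma filter_sum (M : ℕ) (hM : 2 ≤ M) (n k : ℕ) (hk : k < M) :
    ∑ j ∈ Finset.range M, (Complex.exp (2 * π * Complex.I / M) ^ ((n : ℤ) - k)) ^ j =
      if n % M = k then (M : ℂ) else 0 := by
  set w := Complex.exp (2 * π * Complex.I / M) ^ ((n : ℤ) - k) with hw
  have hwM : w ^ M = 1 := by
    rw [hw, ← zpow_natCast, ← zpow_mul]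
    exact (zeta_pow_eq_one_iff M hM _).mpr ⟨(n:ℤ) - k, by ring⟩
  by_cases h : n % M = k
  · have hw1 : w = 1 := (zeta_pow_eq_one_iff M hM _).mpr ((mod_iff_int_dvd M n k hk).mp h)
    simp [h, hw1]
  · have hw1 : w ≠ 1 := fun hc =>
      h ((mod_iff_int_dvd M n k hk).mpr ((zeta_pow_eq_one_iff M hM _).mp hc))
    rw [if_neg h, geom_sum_eq hw1, hwM, sub_self, zero_div]


lemma poissonMod_eq_filtered (μ : ℝ) (M k : ℕ) (hM : 2 ≤ M) (hk : k < M) :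
    poissonMod μ M k = ∑' n : ℕ, (if n % M = k then poissonPMF μ n else 0) := by
  have hMpos : 0 < M := by omega
  have hinj : Function.Injective (fun j : ℕ => k + j * M) := by
    intro a b h
    simp only [add_right_inj] at h
    exact Nat.eq_of_mul_eq_mul_right hMpos h
  have hsupp : Function.support (fun n : ℕ => if n % M = k then poissonPMF μ n else 0)
      ⊆ Set.range (fun j : ℕ => k + j * M) := by
    intro n hn
    have h : n % M = k := by
      by_contra hc; simp [hc] at hn
    refine ⟨n / M, ?_⟩
    have h2 := Nat.div_add_mod n M
    simp only []
    rw [h] at h2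
    rw [Nat.mul_comm] at h2
    omega
  have := hinj.tsum_eq hsupp
  rw [← this]
  unfold poissonMod
  refine tsum_congr fun j => ?_
  have : (k + j * M) % M = k := by
    rw [Nat.add_mul_mod_self_right, Nat.mod_eq_of_lt hk]
  simp [this]

lemma fourier_identity (μ : ℝ) (M k : ℕ) (hM : 2 ≤ M) (hk : k < M) :
    (poissonMod μ M k : ℂ) =
      ∑ j ∈ Finset.range M,
        Complex.exp ((μ:ℂ) * Complex.exp (2 * π * Complex.I / M) ^ j - μ) *
          ((Complex.exp (2 * π * Complex.I / M) ^ (j * k))⁻¹ * (1 / M)) := by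
  set ζ := Complex.exp (2 * π * Complex.I / M) with hζ
  have hζ0 : ζ ≠ 0 := Complex.exp_ne_zero _
  -- each j gives a HasSum
  have hj : ∀ j : ℕ,
      HasSum (fun n : ℕ => (poissonPMF μ n : ℂ) * (ζ ^ j) ^ n * ((ζ ^ (j * k))⁻¹ * (1 / M)))
        (Complex.exp ((μ:ℂ) * ζ ^ j - μ) * ((ζ ^ (j * k))⁻¹ * (1 / M))) :=
    fun j => (poisson_gen μ (ζ ^ j)).mul_right _
  have hsum : HasSum
      (fun n : ℕ => ∑ j ∈ Finset.range M,
        (poissonPMF μ n : ℂ) * (ζ ^ j) ^ n * ((ζ ^ (j * k))⁻¹ * (1 / M)))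
      (∑ j ∈ Finset.range M,
        Complex.exp ((μ:ℂ) * ζ ^ j - μ) * ((ζ ^ (j * k))⁻¹ * (1 / M))) :=
    hasSum_sum fun j _ => hj j
  -- pointwise: the summand equals the filtered pmf
  have hpt : ∀ n : ℕ,
      (∑ j ∈ Finset.range M,
        (poissonPMF μ n : ℂ) * (ζ ^ j) ^ n * ((ζ ^ (j * k))⁻¹ * (1 / M))) =
      (if n % M = k then (poissonPMF μ n : ℂ) else 0) := by
    intro n
    have key : ∑ j ∈ Finset.range M, (ζ ^ ((n : ℤ) - k)) ^ j =
        if n % M = k then (M : ℂ) else 0 := filter_sum M hM n k hk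
    have hterm : ∀ j : ℕ, (ζ ^ j) ^ n * (ζ ^ (j * k))⁻¹ = (ζ ^ ((n : ℤ) - k)) ^ j := by
      intro j
      rw [← zpow_natCast ζ j, ← zpow_natCast (ζ ^ (j:ℤ)) n, ← zpow_mul, ← zpow_natCast ζ (j * k),
        ← zpow_neg, ← zpow_add₀ hζ0, ← zpow_natCast (ζ ^ ((n:ℤ) - k)) j, ← zpow_mul]
      congr 1
      push_cast
      ring
    calc (∑ j ∈ Finset.range M,
        (poissonPMF μ n : ℂ) * (ζ ^ j) ^ n * ((ζ ^ (j * k))⁻¹ * (1 / M)))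
        = (poissonPMF μ n : ℂ) * (1 / M) * ∑ j ∈ Finset.range M, (ζ ^ ((n : ℤ) - k)) ^ j := by
          rw [Finset.mul_sum]
          refine Finset.sum_congr rfl fun j _ => ?_
          rw [← hterm j]; ring
      _ = (if n % M = k then (poissonPMF μ n : ℂ) else 0) := by
          rw [key]
          have hM0 : (M : ℂ) ≠ 0 := Nat.cast_ne_zero.mpr (by omega)
          split <;> field_simp <;> simp
  rw [← hsum.tsum_eq]
  rw [poissonMod_eq_filtered μ M k hM hk]
  rw [Complex.ofReal_tsum]
  refine tsum_congr fun n => ?_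
  rw [hpt n]
  split <;> simp

lemma sin_lower (M j : ℕ) (hM : 2 ≤ M) (h1 : 1 ≤ j) (h2 : j < M) :
    Real.sin (π / M) ≤ Real.sin (π * j / M) := by
  have hMpos : (0:ℝ) < M := by positivity
  have hpi := Real.pi_pos
  have ha : (0:ℝ) < π / M := by positivity
  have haj : π / M ≤ π * j / M := by
    have hj1 : (1:ℝ) ≤ j := by exact_mod_cast h1
    rw [div_le_div_iff₀ hMpos hMpos]
    nlinarith [mul_le_mul_of_nonneg_left hj1 hpi.le]
  have htub : π * j / M ≤ π - π / M := by
    have hj : (j:ℝ) ≤ M - 1 := by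
      have : (j:ℝ) + 1 ≤ M := by exact_mod_cast Nat.succ_le_of_lt h2
      linarith
    rw [div_le_iff₀ hMpos]
    have hM2 : (2:ℝ) ≤ M := by exact_mod_cast hM
    calc π * j ≤ π * (M - 1) := by nlinarith
      _ = (π - π / M) * M := by field_simp
  have hahalf : π / M ≤ π / 2 := by
    apply div_le_div_of_nonneg_left hpi.le two_pos
    exact_mod_cast hM
  rcases le_or_gt (π * j / M) (π / 2) with h | h
  · exact Real.sin_le_sin_of_le_of_le_pi_div_two (by linarith) h haj
  · rw [show Real.sin (π * j / M) = Real.sin (π - π * j / M) from (Real.sin_pi_sub _).symm]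
    exact Real.sin_le_sin_of_le_of_le_pi_div_two (by linarith) (by linarith) (by linarith)

lemma per_k_bound (μ : ℝ) (hμ : 0 < μ) (M k : ℕ) (hM : 2 ≤ M) (hk : k < M) :
    |poissonMod μ M k - 1 / M| ≤
      (((M:ℝ) - 1) / M) * Real.exp (-2 * μ * Real.sin (π / M) ^ 2) := by
  have hMpos : (0:ℝ) < M := by positivity
  set ζ := Complex.exp (2 * π * Complex.I / M) with hζ
  set E := Real.exp (-2 * μ * Real.sin (π / M) ^ 2) with hE
  have hfour := fourier_identity μ M k hM hk
  rw [Finset.range_eq_Ico, Finset.sum_eq_sum_Ico_succ_bot (by omega : 0 < M)] at hfour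
  have h0 : Complex.exp ((μ:ℂ) * ζ ^ 0 - μ) * ((ζ ^ (0 * k))⁻¹ * (1 / M)) = 1 / M := by
    simp
  rw [h0] at hfour
  have hdiff : ((poissonMod μ M k - 1 / M : ℝ) : ℂ) =
      ∑ j ∈ Finset.Ico 1 M, Complex.exp ((μ:ℂ) * ζ ^ j - μ) * ((ζ ^ (j * k))⁻¹ * (1 / M)) := by
    push_cast
    rw [hfour]; ring
  have habs : |poissonMod μ M k - 1 / M| =
      norm (∑ j ∈ Finset.Ico 1 M,
        Complex.exp ((μ:ℂ) * ζ ^ j - μ) * ((ζ ^ (j * k))⁻¹ * (1 / M))) := by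
    rw [← hdiff, Complex.norm_real, Real.norm_eq_abs]
  rw [habs]
  -- bound each term
  have hterm : ∀ j ∈ Finset.Ico 1 M,
      norm (Complex.exp ((μ:ℂ) * ζ ^ j - μ) * ((ζ ^ (j * k))⁻¹ * (1 / M))) ≤ E * (1 / M) := by
    intro j hj
    rw [Finset.mem_Ico] at hj
    have hζj : ζ ^ j = Complex.exp ((2 * π * j / M : ℝ) * Complex.I) := by
      rw [hζ, ← Complex.exp_nat_mul]
      congr 1
      push_cast
      ring
    have hζjk : ζ ^ (j * k) = Complex.exp ((2 * π * (j * k) / M : ℝ) * Complex.I) := by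
      rw [hζ, ← Complex.exp_nat_mul]
      congr 1
      push_cast
      ring
    have h1 : norm ((ζ ^ (j * k))⁻¹ * (1 / M : ℂ)) = 1 / M := by
      rw [norm_mul, norm_inv, hζjk, Complex.norm_exp_ofReal_mul_I]
      simp [abs_of_pos hMpos]
    have h2 : norm (Complex.exp ((μ:ℂ) * ζ ^ j - μ)) ≤ E := by
      rw [Complex.norm_exp]
      have hre : ((μ:ℂ) * ζ ^ j - μ).re = μ * Real.cos (2 * π * j / M) - μ := by
        rw [hζj, Complex.sub_re, Complex.mul_re, Complex.ofReal_re, Complex.ofReal_im,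
          Complex.exp_ofReal_mul_I_re]
        ring
      rw [hre]
      apply Real.exp_le_exp.mpr
      have hcos : Real.cos (2 * π * j / M) = 1 - 2 * Real.sin (π * j / M) ^ 2 := by
        have h2x : 2 * π * (j:ℝ) / M = 2 * (π * j / M) := by ring
        rw [h2x, Real.cos_two_mul]
        nlinarith [Real.sin_sq_add_cos_sq (π * j / M)]
      rw [hcos]
      have hsin := sin_lower M j hM hj.1 hj.2
      have hs0 : 0 ≤ Real.sin (π / M) := by
        apply Real.sin_nonneg_of_nonneg_of_le_pi
        · positivity
        · rw [div_le_iff₀ hMpos]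
          nlinarith [Real.pi_pos, (by exact_mod_cast hM : (2:ℝ) ≤ M),
            mul_le_mul_of_nonneg_left (by exact_mod_cast hM : (2:ℝ) ≤ M) Real.pi_pos.le]
      have hsq : Real.sin (π / M) ^ 2 ≤ Real.sin (π * j / M) ^ 2 :=
        pow_le_pow_left₀ hs0 hsin 2
      nlinarith
    calc norm (Complex.exp ((μ:ℂ) * ζ ^ j - μ) * ((ζ ^ (j * k))⁻¹ * (1 / M)))
        = norm (Complex.exp ((μ:ℂ) * ζ ^ j - μ)) *
            norm ((ζ ^ (j * k))⁻¹ * (1 / M : ℂ)) := by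
          rw [norm_mul]
      _ ≤ E * (1 / M) := by
          rw [h1]
          apply mul_le_mul_of_nonneg_right h2
          positivity
  calc norm (∑ j ∈ Finset.Ico 1 M,
        Complex.exp ((μ:ℂ) * ζ ^ j - μ) * ((ζ ^ (j * k))⁻¹ * (1 / M)))
      ≤ ∑ j ∈ Finset.Ico 1 M,
          norm (Complex.exp ((μ:ℂ) * ζ ^ j - μ) * ((ζ ^ (j * k))⁻¹ * (1 / M))) := by
        exact norm_sum_le _ _
    _ ≤ ∑ j ∈ Finset.Ico 1 M, E * (1 / M) := Finset.sum_le_sum hterm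
    _ = (((M:ℝ) - 1) / M) * E := by
        rw [Finset.sum_const, Nat.card_Ico]
        have : ((M - 1 : ℕ) : ℝ) = (M:ℝ) - 1 := by
          rw [Nat.cast_sub (by omega)]; simp
        rw [nsmul_eq_mul, this]
        ring

/-- For `n ∼ Poisson(μ)` and `M ≥ 2`, the total variation distance between the
distribution of `n mod M` and the uniform distribution on `{0, …, M−1}` is at most
`((M−1)/2) exp (−2 μ sin² (π/M))`. -/
theorem poisson_mod_total_variation_bound (μ : ℝ) (hμ : 0 < μ) (M : ℕ) (hM : 2 ≤ M) :
    (1 / 2) * ∑ k ∈ Finset.range M, |poissonMod μ M k - 1 / M| ≤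
      ((M - 1) / 2) * Real.exp (-2 * μ * Real.sin (π / M) ^ 2) := by
  have hMpos : (0:ℝ) < M := by positivity
  set E := Real.exp (-2 * μ * Real.sin (π / M) ^ 2) with hE
  have hEpos : 0 < E := Real.exp_pos _
  have hsum : ∑ k ∈ Finset.range M, |poissonMod μ M k - 1 / M| ≤
      M * ((((M:ℝ) - 1) / M) * E) := by
    calc ∑ k ∈ Finset.range M, |poissonMod μ M k - 1 / M|
        ≤ ∑ _k ∈ Finset.range M, (((M:ℝ) - 1) / M) * E :=
          Finset.sum_le_sum fun k hk =>
            per_k_bound μ hμ M k hM (Finset.mem_range.mp hk)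
      _ = M * ((((M:ℝ) - 1) / M) * E) := by
          rw [Finset.sum_const, Finset.card_range, nsmul_eq_mul]
  calc (1 / 2) * ∑ k ∈ Finset.range M, |poissonMod μ M k - 1 / M|
      ≤ (1 / 2) * (M * ((((M:ℝ) - 1) / M) * E)) := by linarith
    _ = (((M:ℝ) - 1) / 2) * E := by
        field_simp
end
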